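/- arXiv:1112.0648 — 5 statements merged into one kernel-verified Lean document; each statement's English description precedes it below -/
import Mathlib

section
/- For integers n ≥ 1, p ≥ 1, q ≥ 1, k ≥ 0, the alternating binomial sum Σ_{j=0}^{min(n,k)} (-1)^j C(n,j) · (n-1+p+k-j)! (n-1+q+k-j)! / [(n-1+p+q+k-j)! (k-j)!] equals (p+n-1)! (q+n-1)! (p+k-1)! (q+k-1)! / [k! (p-1)! (q-1)! (p+q+n+k-1)!]. -/
/-!
Write `n = c + 1`, `p = a + 1`, `q = b + 1` and let `S k` be the sum, taken over all `j ≤ k`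
(the terms with `j > n` vanish). Creative telescoping in `j` gives the first-order recurrence
`(k + 1) (a + b + c + k + 3) S (k + 1) = (a + k + 1) (b + k + 1) S k`; the closed form satisfies
the same recurrence and agrees with `S 0`.
-/

open Finset
open scoped Nat

theorem Nat.cast_choose_succ_mul {R : Type*} [Ring R] (n j : ℕ) :
    (n.choose (j + 1) : R) * (j + 1) = n.choose j * (n - j) := by
  rcases le_or_gt j n with hjn | hnj
  · have h := congrArg (Nat.cast : ℕ → R) (Nat.choose_succ_right_eq n j)
    push_cast [Nat.cast_sub hjn] at h
    exact h
  · simp [Nat.choose_eq_zero_of_lt hnj, Nat.choose_eq_zero_of_lt (hnj.trans (Nat.lt_succ_self j))]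

noncomputable def saalschutzTerm (a b c k j : ℕ) : ℝ :=
  (-1) ^ j * (c + 1).choose j * ((c + a + 1 + (k - j))! * (c + b + 1 + (k - j))!) /
    ((c + a + b + 2 + (k - j))! * (k - j)!)

-- The certificate produced by Zeilberger's algorithm for the recurrence in `k`.
noncomputable def saalschutzCert (a b c k j : ℕ) : ℝ :=
  -j * (c + a + b + 2 * k + 4 - j) * saalschutzTerm a b c (k + 1) j

theorem saalschutzTerm_recurrence (a b c k j : ℕ) (hjk : j ≤ k) :
    (k + 1) * (c + a + b + k + 3) * saalschutzTerm a b c (k + 1) j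
      - (a + k + 1) * (b + k + 1) * saalschutzTerm a b c k j
    = saalschutzCert a b c k (j + 1) - saalschutzCert a b c k j := by
  obtain ⟨m, rfl⟩ := Nat.exists_eq_add_of_le hjk
  have hchoose : ((c + 1).choose (j + 1) : ℝ) = (c + 1).choose j * (c + 1 - j) / (j + 1) := by
    rw [eq_div_iff (by positivity), Nat.cast_choose_succ_mul]; push_cast; ring
  simp only [saalschutzTerm, saalschutzCert, hchoose,
    show j + m + 1 - j = m + 1 by omega, Nat.add_sub_cancel_left,
    show j + m + 1 - (j + 1) = m by omega, ← add_assoc, Nat.factorial_succ]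
  push_cast
  field_simp
  ring

theorem saalschutz_sum_recurrence (a b c k : ℕ) :
    (k + 1) * (c + a + b + k + 3) * ∑ j ∈ range (k + 2), saalschutzTerm a b c (k + 1) j
      = (a + k + 1) * (b + k + 1) * ∑ j ∈ range (k + 1), saalschutzTerm a b c k j := by
  have htelescope := sum_range_sub (saalschutzCert a b c k) (k + 1)
  rw [sum_congr rfl fun j hj ↦
    (saalschutzTerm_recurrence a b c k j (Nat.lt_succ_iff.mp (mem_range.mp hj))).symm,
    sum_sub_distrib, ← mul_sum, ← mul_sum] at htelescope
  have hcert_zero : saalschutzCert a b c k 0 = 0 := by simp [saalschutzCert]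
  have hcert_top : saalschutzCert a b c k (k + 1)
      = -((k + 1) * (c + a + b + k + 3)) * saalschutzTerm a b c (k + 1) (k + 1) := by
    simp only [saalschutzCert]; push_cast; ring
  rw [hcert_zero, hcert_top] at htelescope
  rw [sum_range_succ _ (k + 1)]
  linear_combination htelescope

theorem saalschutz_sum_eq (a b c k : ℕ) :
    ∑ j ∈ range (k + 1), saalschutzTerm a b c k j
      = ((a + c + 1)! * (b + c + 1)! * (a + k)! * (b + k)! : ℝ) /
        (k ! * a ! * b ! * (a + b + c + k + 2)!) := by
  induction k with
  | zero =>
    simp only [zero_add, sum_range_one, saalschutzTerm, Nat.sub_self, add_zero, pow_zero,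
      Nat.choose_zero_right, Nat.factorial_zero, Nat.cast_one, one_mul, mul_one]
    rw [show a + c = c + a by omega, show b + c = c + b by omega,
      show a + b + c + 2 = c + a + b + 2 by omega]
    field_simp
  | succ k ih =>
    have hrec := saalschutz_sum_recurrence a b c k
    rw [ih] at hrec
    rw [← mul_right_inj' (show ((k : ℝ) + 1) * (c + a + b + k + 3) ≠ 0 by positivity), hrec,
      show a + (k + 1) = a + k + 1 by omega, show b + (k + 1) = b + k + 1 by omega,
      show a + b + c + (k + 1) + 2 = a + b + c + k + 2 + 1 by omega]
    push_cast [Nat.factorial_succ]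
    field_simp
    ring

theorem saalschutzTerm_eq_zero_of_lt {a b c k j : ℕ} (hj : c + 1 < j) :
    saalschutzTerm a b c k j = 0 := by
  simp [saalschutzTerm, Nat.choose_eq_zero_of_lt hj]

/-- The Pfaff–Saalschütz instance: alternating binomial sum identity used for the
Poisson–Szegő kernel expansion. -/
theorem alternating_binomial_sum (n p q k : ℕ) (hn : 1 ≤ n) (hp : 1 ≤ p) (hq : 1 ≤ q) :
    ∑ j ∈ Finset.range (min n k + 1),
      (-1 : ℝ) ^ j * (n.choose j : ℝ) *
        (((n - 1 + p + (k - j)).factorial * (n - 1 + q + (k - j)).factorial : ℕ) : ℝ) /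
        (((n - 1 + p + q + (k - j)).factorial * (k - j).factorial : ℕ) : ℝ) =
    (((p + n - 1).factorial * (q + n - 1).factorial *
        (p + k - 1).factorial * (q + k - 1).factorial : ℕ) : ℝ) /
      ((k.factorial * (p - 1).factorial * (q - 1).factorial *
        (p + q + n + k - 1).factorial : ℕ) : ℝ) := by
  obtain ⟨c, rfl⟩ := Nat.exists_eq_add_of_le' hn
  obtain ⟨a, rfl⟩ := Nat.exists_eq_add_of_le' hp
  obtain ⟨b, rfl⟩ := Nat.exists_eq_add_of_le' hq
  have hterms : ∀ j ∈ range (min (c + 1) k + 1),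
      (-1 : ℝ) ^ j * ((c + 1).choose j : ℝ) *
        (((c + 1 - 1 + (a + 1) + (k - j))! * (c + 1 - 1 + (b + 1) + (k - j))! : ℕ) : ℝ) /
        (((c + 1 - 1 + (a + 1) + (b + 1) + (k - j))! * (k - j)! : ℕ) : ℝ)
      = saalschutzTerm a b c k j := fun j _ ↦ by
    rw [saalschutzTerm, Nat.add_sub_cancel, show c + (a + 1) + (b + 1) = c + a + b + 2 by omega]
    push_cast
    rfl
  have htail : ∀ j ∈ range (k + 1), j ∉ range (min (c + 1) k + 1) →
      saalschutzTerm a b c k j = 0 := fun j hjk hj ↦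
    saalschutzTerm_eq_zero_of_lt (by simp only [mem_range] at hjk hj; omega)
  rw [sum_congr rfl hterms, sum_subset (range_subset_range.mpr (by omega)) htail,
    saalschutz_sum_eq, show a + 1 + (c + 1) - 1 = a + c + 1 by omega,
    show b + 1 + (c + 1) - 1 = b + c + 1 by omega, show a + 1 + k - 1 = a + k by omega,
    show b + 1 + k - 1 = b + k by omega, Nat.add_sub_cancel, Nat.add_sub_cancel,
    show a + 1 + (b + 1) + (c + 1) + k - 1 = a + b + c + k + 2 by omega]
  push_cast
  ring
end

section
/- For integers n ≥ 1 and p, q ≥ 0 with p+q ≥ 0, and 0 ≤ r < 1: (1-r²)^n · r^{p+q} · Σ_{k=0}^∞ [(n-1+p+k)!(n-1+q+k)!]/[(n-1)!(n-1+p+q+k)! k!] · r^{2k} = r^{p+q} · [(p+n-1)!(q+n-1)!]/[(n-1)!(p-1)!(q-1)!] · Σ_{k=0}^∞ [(p+k-1)!(q+k-1)!]/[(n-1+p+q+k)! k!] · r^{2k}, for p, q ≥ 1. -/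
open Finset

/-! Put `x = r²`, `a = n - 1`, `b = p - 1`, `c = q - 1`. Up to constants the identity is Euler's
transformation `(1 - x)^(a+1) ₂F₁(a+b+2, a+c+2; a+b+c+3; x) = ₂F₁(b+1, c+1; a+b+c+3; x)`.
Since `(1 - x)^(a+1)` is a polynomial, the Cauchy product reduces it to an identity of coefficients:
the Pfaff–Saalschütz sum `S(m) = ∑ⱼ (-1)ʲ C(a+1, j) u(m - j)` equals `C v(m)`, where `u` and `v` are
the coefficients of the two series. Both sides satisfy the same first-order recurrence in `m`: for
`v` it is a ratio of factorials, for `S` it follows by telescoping with a Wilf–Zeilberger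
certificate. -/

noncomputable def factorialRatio (s t w k : ℕ) : ℝ :=
  ((s + k).factorial * (t + k).factorial : ℝ) / ((w + k).factorial * k.factorial)

lemma factorialRatio_succ (s t w k : ℕ) :
    factorialRatio s t w (k + 1) * ((w + k + 1) * (k + 1)) =
      factorialRatio s t w k * ((s + k + 1) * (t + k + 1)) := by
  simp only [factorialRatio, ← add_assoc, Nat.factorial_succ]
  push_cast
  field_simp

lemma factorialRatio_nonneg (s t w k : ℕ) : 0 ≤ factorialRatio s t w k := by
  unfold factorialRatio; positivity

lemma factorialRatio_le {s w : ℕ} (t k : ℕ) (h : s ≤ w) :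
    factorialRatio s t w k ≤ t.factorial * (k + t).choose t := by
  have hsw : ((s + k).factorial : ℝ) ≤ (w + k).factorial := by
    exact_mod_cast Nat.factorial_le (by omega)
  have ht : ((t + k).factorial : ℝ) = (k + t).choose t * k.factorial * t.factorial := by
    rw [add_comm t k]; exact_mod_cast (Nat.add_choose_mul_factorial_mul_factorial k t).symm
  rw [factorialRatio, div_le_iff₀ (by positivity), ht]
  calc _ ≤ ((w + k).factorial : ℝ) * ((k + t).choose t * k.factorial * t.factorial) :=
        mul_le_mul_of_nonneg_right hsw (by positivity)
    _ = _ := by ring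

lemma summable_factorialRatio_mul_pow {s w : ℕ} (t : ℕ) (h : s ≤ w) {x : ℝ} (hx0 : 0 ≤ x)
    (hx1 : x < 1) : Summable fun k => factorialRatio s t w k * x ^ k := by
  have hx : ‖x‖ < 1 := by rwa [Real.norm_eq_abs, abs_of_nonneg hx0]
  refine Summable.of_nonneg_of_le (fun k => by have := factorialRatio_nonneg s t w k; positivity)
    (fun k => ?_) ((summable_choose_mul_geometric_of_norm_lt_one t hx).mul_left (t.factorial : ℝ))
  rw [← mul_assoc]
  exact mul_le_mul_of_nonneg_right (factorialRatio_le t k h) (pow_nonneg hx0 k)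

noncomputable def altChoose (N j : ℕ) : ℝ := (-1) ^ j * N.choose j

lemma altChoose_succ_mul (N j : ℕ) :
    altChoose N (j + 1) * (j + 1) = -altChoose N j * (N - j) := by
  have key : ((N.choose (j + 1) : ℕ) : ℝ) * (j + 1) = N.choose j * (N - j) := by
    rcases le_or_gt j N with h | h
    · have := congrArg (Nat.cast : ℕ → ℝ) (Nat.choose_succ_right_eq N j)
      push_cast [Nat.cast_sub h] at this
      exact this
    · simp [Nat.choose_eq_zero_of_lt h, Nat.choose_eq_zero_of_lt (Nat.lt_succ_of_lt h)]
  simp only [altChoose, pow_succ]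
  linear_combination (-(-1 : ℝ) ^ j) * key

lemma tsum_altChoose_mul_pow (N : ℕ) (x : ℝ) : ∑' j, altChoose N j * x ^ j = (1 - x) ^ N := by
  rw [tsum_eq_sum (s := range (N + 1)), sub_eq_neg_add, add_pow]
  · refine sum_congr rfl fun j _ => ?_
    rw [altChoose, neg_pow]
    ring
  · intro j hj
    simp [altChoose, Nat.choose_eq_zero_of_lt (by simpa using hj : N < j)]

lemma summable_norm_altChoose_mul_pow (N : ℕ) (x : ℝ) :
    Summable fun j => ‖altChoose N j * x ^ j‖ :=
  summable_of_ne_finset_zero (s := range (N + 1)) fun j hj => by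
    simp [altChoose, Nat.choose_eq_zero_of_lt (by simpa using hj : N < j)]

lemma one_sub_pow_mul_tsum (N : ℕ) {f : ℕ → ℝ} {x : ℝ} (hf : Summable fun k => ‖f k * x ^ k‖) :
    (1 - x) ^ N * ∑' k, f k * x ^ k =
      ∑' m, (∑ j ∈ range (m + 1), altChoose N j * f (m - j)) * x ^ m := by
  rw [← tsum_altChoose_mul_pow N x,
    tsum_mul_tsum_eq_tsum_sum_range_of_summable_norm (summable_norm_altChoose_mul_pow N x) hf]
  refine tsum_congr fun m => ?_
  rw [sum_mul]
  refine sum_congr rfl fun j hj => ?_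
  rw [← pow_sub_mul_pow x (by simpa [Nat.lt_succ_iff] using hj : j ≤ m)]
  ring

section Saalschutz

variable (a b c : ℕ)

local notation "u" => factorialRatio (a + b + 1) (a + c + 1) (a + b + c + 2)

noncomputable def saalschutzSum (m : ℕ) : ℝ :=
  ∑ j ∈ range (m + 1), altChoose (a + 1) j * u (m - j)

-- After division by `altChoose (a + 1) j * u i`, the recurrences of both factors make this a
-- polynomial identity.
lemma saalschutz_wz_certificate {j i m : ℕ} (hm : j + i = m) :
    (a + b + c + m + 3) * (m + 1) * (altChoose (a + 1) j * u (i + 1)) -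
        (b + m + 1) * (c + m + 1) * (altChoose (a + 1) j * u i) =
      (j + 1) * (j + 1 - (a + b + c + 2 * m + 4)) * altChoose (a + 1) (j + 1) * u i -
        j * (j - (a + b + c + 2 * m + 4)) * altChoose (a + 1) j * u (i + 1) := by
  subst hm
  have hc := altChoose_succ_mul (a + 1) j
  have hu := factorialRatio_succ (a + b + 1) (a + c + 1) (a + b + c + 2) i
  push_cast at hc hu ⊢
  have hne : ((j : ℝ) + 1) * ((a + b + c + 2 + i + 1) * (i + 1)) ≠ 0 := by positivity
  apply mul_left_cancel₀ hne
  linear_combination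
    ((j + 1) * ((a + b + c + (j + i) + 3) * (j + i + 1)
        + j * (j - (a + b + c + 2 * (j + i) + 4))) * altChoose (a + 1) j) * hu
    - ((j + 1 - (a + b + c + 2 * (j + i) + 4)) * ((a + b + c + 3 + i) * (i + 1))
        * u i * (j + 1)) * hc

lemma saalschutzSum_succ (m : ℕ) :
    (a + b + c + m + 3) * (m + 1) * saalschutzSum a b c (m + 1) =
      (b + m + 1) * (c + m + 1) * saalschutzSum a b c m := by
  set K : ℝ := a + b + c + 2 * m + 4
  set E : ℕ → ℝ := fun j => j * (j - K) * altChoose (a + 1) j * u (m + 1 - j)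
  have htelescope : ∑ j ∈ range (m + 1), (E (j + 1) - E j) = E (m + 1) - E 0 :=
    sum_range_sub E (m + 1)
  have hterm : ∀ j ∈ range (m + 1), E (j + 1) - E j =
      (a + b + c + m + 3) * (m + 1) * (altChoose (a + 1) j * u (m + 1 - j)) -
        (b + m + 1) * (c + m + 1) * (altChoose (a + 1) j * u (m - j)) := by
    intro j hj
    have hjm : j + (m - j) = m := by simp at hj; omega
    simp only [E]
    rw [show m + 1 - (j + 1) = m - j by omega, show m + 1 - j = m - j + 1 by omega,
      saalschutz_wz_certificate a b c hjm]
    push_cast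
    ring
  rw [sum_congr rfl hterm, sum_sub_distrib, ← mul_sum, ← mul_sum] at htelescope
  rw [saalschutzSum, sum_range_succ, saalschutzSum, Nat.sub_self]
  simp only [E, Nat.sub_self] at htelescope
  push_cast at htelescope
  linear_combination htelescope

theorem saalschutzSum_eq (m : ℕ) :
    saalschutzSum a b c m = (a + b + 1).factorial * (a + c + 1).factorial /
      (b.factorial * c.factorial) * factorialRatio b c (a + b + c + 2) m := by
  induction m with
  | zero =>
    simp only [saalschutzSum, zero_add, range_one, sum_singleton, altChoose, factorialRatio,
      pow_zero, Nat.choose_zero_right, add_zero]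
    push_cast
    field_simp
  | succ m ih =>
    have hv := factorialRatio_succ b c (a + b + c + 2) m
    push_cast at hv
    have hA : ((a : ℝ) + b + c + m + 3) * (m + 1) ≠ 0 := by positivity
    apply mul_left_cancel₀ hA
    rw [saalschutzSum_succ, ih]
    linear_combination (-(a + b + 1).factorial * (a + c + 1).factorial /
      (b.factorial * c.factorial) : ℝ) * hv

end Saalschutz

theorem one_sub_pow_mul_tsum_factorialRatio (a b c : ℕ) {x : ℝ} (hx0 : 0 ≤ x) (hx1 : x < 1) :
    (1 - x) ^ (a + 1) * ∑' k, factorialRatio (a + b + 1) (a + c + 1) (a + b + c + 2) k * x ^ k =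
      (a + b + 1).factorial * (a + c + 1).factorial / (b.factorial * c.factorial) *
        ∑' m, factorialRatio b c (a + b + c + 2) m * x ^ m := by
  have hsum := (summable_factorialRatio_mul_pow (a + c + 1) (by omega : a + b + 1 ≤ a + b + c + 2)
    hx0 hx1).abs
  rw [one_sub_pow_mul_tsum (a + 1) hsum, ← tsum_mul_left]
  refine tsum_congr fun m => ?_
  rw [← saalschutzSum, saalschutzSum_eq]
  ring

/-- Conversion of the expansion of 1/|1-r⟨ξ,η⟩|^{2n} into Folland's coefficients
S_n^{p,q}(r) for the Poisson–Szegő kernel. -/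
theorem poisson_szego_series_identity (n p q : ℕ) (hn : 1 ≤ n) (hp : 1 ≤ p) (hq : 1 ≤ q)
    (r : ℝ) (hr0 : 0 ≤ r) (hr1 : r < 1) :
    (1 - r ^ 2) ^ n * r ^ (p + q) *
        ∑' k : ℕ, (((n - 1 + p + k).factorial * (n - 1 + q + k).factorial : ℕ) : ℝ) /
          (((n - 1).factorial * (n - 1 + p + q + k).factorial * k.factorial : ℕ) : ℝ) *
          r ^ (2 * k) =
      r ^ (p + q) *
        ((((p + n - 1).factorial * (q + n - 1).factorial : ℕ) : ℝ) /
          (((n - 1).factorial * (p - 1).factorial * (q - 1).factorial : ℕ) : ℝ)) *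
        ∑' k : ℕ, (((p + k - 1).factorial * (q + k - 1).factorial : ℕ) : ℝ) /
          (((n - 1 + p + q + k).factorial * k.factorial : ℕ) : ℝ) * r ^ (2 * k) := by
  obtain ⟨a, rfl⟩ : ∃ a, n = a + 1 := ⟨n - 1, by omega⟩
  obtain ⟨b, rfl⟩ : ∃ b, p = b + 1 := ⟨p - 1, by omega⟩
  obtain ⟨c, rfl⟩ : ∃ c, q = c + 1 := ⟨q - 1, by omega⟩
  simp only [Nat.add_sub_cancel]
  have hL : ∀ k : ℕ, (((a + (b + 1) + k).factorial * (a + (c + 1) + k).factorial : ℕ) : ℝ) /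
      ((a.factorial * (a + (b + 1) + (c + 1) + k).factorial * k.factorial : ℕ) : ℝ) * r ^ (2 * k) =
      (a.factorial : ℝ)⁻¹ *
        (factorialRatio (a + b + 1) (a + c + 1) (a + b + c + 2) k * (r ^ 2) ^ k) := by
    intro k
    rw [factorialRatio, ← pow_mul,
      show a + (b + 1) + (c + 1) + k = a + b + c + 2 + k by omega, ← add_assoc a b, ← add_assoc a c]
    push_cast
    ring
  have hR : ∀ k : ℕ, (((b + 1 + k - 1).factorial * (c + 1 + k - 1).factorial : ℕ) : ℝ) /
      (((a + (b + 1) + (c + 1) + k).factorial * k.factorial : ℕ) : ℝ) * r ^ (2 * k) =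
      factorialRatio b c (a + b + c + 2) k * (r ^ 2) ^ k := by
    intro k
    rw [factorialRatio, ← pow_mul, show a + (b + 1) + (c + 1) + k = a + b + c + 2 + k by omega,
      show b + 1 + k - 1 = b + k by omega, show c + 1 + k - 1 = c + k by omega]
    push_cast
    ring
  have hT := one_sub_pow_mul_tsum_factorialRatio a b c (sq_nonneg r) (by nlinarith)
  rw [tsum_congr hL, tsum_congr hR, tsum_mul_left, show b + 1 + (a + 1) - 1 = a + b + 1 by omega,
    show c + 1 + (a + 1) - 1 = a + c + 1 by omega]
  push_cast
  linear_combination (r ^ (b + 1 + (c + 1)) * (a.factorial : ℝ)⁻¹) * hT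
end

section
/- Let α ≥ 0 be an integer and define the disc polynomial W^α_{p,q}(w) = [(α+1)_{p+q} / ((α+1)_p (α+1)_q)] · w^p w̄^q · ₂F₁(-p, -q; -α-p-q; 1/|w|²) for w ≠ 0 (the hypergeometric sum terminates, so the expression is a polynomial in w, w̄ extended to all of ℂ). Then for all w in the closed unit disc |w| ≤ 1, one has |W^α_{p,q}(w)| ≤ 1, with W^α_{p,q}(1) = 1. -/
/-- The disc polynomial W^α_{p,q} in the Dunkl–Xu normalization, written as a polynomial
in w and w̄ (the terminating hypergeometric series with denominators cleared). -/
noncomputable def discW (α p q : ℕ) (w : ℂ) : ℂ :=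
  (((ascPochhammer ℝ (p + q)).eval ((α : ℝ) + 1) /
      ((ascPochhammer ℝ p).eval ((α : ℝ) + 1) * (ascPochhammer ℝ q).eval ((α : ℝ) + 1)) : ℝ) : ℂ) *
    ∑ i ∈ Finset.range (min p q + 1),
      ((((ascPochhammer ℝ i).eval (-(p : ℝ)) * (ascPochhammer ℝ i).eval (-(q : ℝ))) /
          ((ascPochhammer ℝ i).eval (-(α : ℝ) - p - q) * (i.factorial : ℝ)) : ℝ) : ℂ) *
        w ^ (p - i) * ((starRingEnd ℂ) w) ^ (q - i)

/-!
Work with polynomials in `z, z̄ ∈ ℂ^{α+2}` (as independent variables) and the Fischer inner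
product `⟪f, g⟫ = ∑ₘ m! · conj (f m) · g m`, for which multiplication by a variable is adjoint
to differentiation in it. For a unit vector `x` let
`Fₓ(z) = ∑ⱼ cⱼ |z|^{2j} ⟨z, x⟩^{p-j} ⟨x, z⟩^{q-j}`, where `cⱼ` are the coefficients of the
`₂F₁` in `W`. Their two-term recurrence is exactly the statement that `Fₓ` is harmonic, and
harmonicity kills every term of `F_y` with a factor `|z|²` in `⟪Fₓ, F_y⟫`. What remains gives the
reproducing identity `⟪Fₓ, F_y⟫ = p! q! ∑ⱼ cⱼ w^{p-j} w̄^{q-j}` with `w = ⟨x, y⟩`. Every `w` in the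
closed disc is such an inner product of unit vectors, so Cauchy–Schwarz bounds the sum by its
value at `w = 1`, and by Chu–Vandermonde the prefactor of `W` is the reciprocal of that value.
-/

open MvPolynomial Finset

namespace DiscPolynomial

lemma sum_range_succ_add_eq_zero {M : Type*} [AddCommMonoid M] {f g : ℕ → M} {m : ℕ}
    (h0 : f 0 = 0) (hm : g m = 0) (h : ∀ j < m, f (j + 1) + g j = 0) :
    ∑ j ∈ range (m + 1), (f j + g j) = 0 := by
  rw [sum_add_distrib, sum_range_succ', sum_range_succ g, h0, hm, add_zero, add_zero, add_comm,
    ← sum_add_distrib]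
  exact sum_eq_zero fun j hj => by rw [add_comm]; exact h j (mem_range.mp hj)

section Fischer

variable {σ : Type*} [Fintype σ]

def fischerWeight (m : σ →₀ ℕ) : ℕ := ∏ v, (m v).factorial

lemma fischerWeight_add_single [DecidableEq σ] (b : σ →₀ ℕ) (v : σ) :
    fischerWeight (b + Finsupp.single v 1) = (b v + 1) * fischerWeight b := by
  unfold fischerWeight
  rw [← Finset.mul_prod_erase _ _ (mem_univ v), ← Finset.mul_prod_erase _ _ (mem_univ v),
    ← mul_assoc]
  congr 1
  · simp [Nat.factorial_succ]
  · refine Finset.prod_congr rfl fun u hu => ?_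
    simp [(Finset.ne_of_mem_erase hu).symm]

lemma sum_fischer_support_subset {f : MvPolynomial σ ℂ} {T : Finset (σ →₀ ℕ)}
    (hf : f.support ⊆ T) (g : MvPolynomial σ ℂ) :
    ∑ m ∈ f.support, (fischerWeight m : ℂ) * star (f.coeff m) * g.coeff m =
      ∑ m ∈ T, (fischerWeight m : ℂ) * star (f.coeff m) * g.coeff m :=
  Finset.sum_subset hf fun m _ hm => by simp [notMem_support_iff.mp hm]

variable (σ) in
noncomputable def fischer : MvPolynomial σ ℂ →ₗ⋆[ℂ] MvPolynomial σ ℂ →ₗ[ℂ] ℂ :=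
  LinearMap.mk₂'ₛₗ (starRingEnd ℂ) (RingHom.id ℂ)
    (fun f g => ∑ m ∈ f.support, (fischerWeight m : ℂ) * star (f.coeff m) * g.coeff m)
    (fun f₁ f₂ g => by
      classical
      rw [sum_fischer_support_subset (support_add (p := f₁) (q := f₂)),
        sum_fischer_support_subset (subset_union_left (s₂ := f₂.support)),
        sum_fischer_support_subset (subset_union_right (s₁ := f₁.support)),
        ← Finset.sum_add_distrib]
      exact Finset.sum_congr rfl fun _ _ => by rw [coeff_add, star_add]; ring)
    (fun c f g => by
      rw [sum_fischer_support_subset (support_smul (a := c) (f := f)), Finset.smul_sum]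
      exact Finset.sum_congr rfl fun _ _ => by
        rw [coeff_smul, smul_eq_mul, star_mul', smul_eq_mul, starRingEnd_apply]; ring)
    (fun f g₁ g₂ => by
      simp only [coeff_add, mul_add, Finset.sum_add_distrib])
    (fun c f g => by
      simp only [coeff_smul, smul_eq_mul, Finset.mul_sum, RingHom.id_apply]
      exact Finset.sum_congr rfl fun _ _ => by ring)

lemma fischer_apply_of_subset {f : MvPolynomial σ ℂ} {T : Finset (σ →₀ ℕ)}
    (hf : f.support ⊆ T) (g : MvPolynomial σ ℂ) :
    fischer σ f g = ∑ m ∈ T, (fischerWeight m : ℂ) * star (f.coeff m) * g.coeff m :=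
  sum_fischer_support_subset hf g

lemma star_fischer (f g : MvPolynomial σ ℂ) : star (fischer σ f g) = fischer σ g f := by
  classical
  rw [fischer_apply_of_subset (subset_union_left (s₂ := g.support)),
    fischer_apply_of_subset (subset_union_right (s₁ := f.support)), star_sum]
  exact Finset.sum_congr rfl fun _ _ => by
    rw [star_mul', star_mul', star_star, star_natCast]; ring

lemma fischer_monomial_right [DecidableEq σ] (f : MvPolynomial σ ℂ) (b : σ →₀ ℕ) (d : ℂ) :
    fischer σ f (monomial b d) = fischerWeight b * star (f.coeff b) * d := by
  rw [fischer_apply_of_subset (subset_insert b f.support),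
    sum_eq_single_of_mem b (mem_insert_self _ _) fun m _ hm => by simp [coeff_monomial, Ne.symm hm],
    coeff_monomial, if_pos rfl]

lemma fischer_X_mul_right (f g : MvPolynomial σ ℂ) (v : σ) :
    fischer σ f (X v * g) = fischer σ (pderiv v f) g := by
  classical
  induction g using MvPolynomial.induction_on' with
  | monomial b d =>
    rw [X, monomial_mul, one_mul, add_comm, fischer_monomial_right, fischer_monomial_right,
      coeff_pderiv, fischerWeight_add_single]
    simp only [star_mul', star_add, star_natCast, star_one]
    push_cast
    ring
  | add g₁ g₂ h₁ h₂ => rw [mul_add, map_add, map_add, h₁, h₂]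

lemma fischer_X_mul_left (f g : MvPolynomial σ ℂ) (v : σ) :
    fischer σ (X v * f) g = fischer σ f (pderiv v g) := by
  rw [← star_fischer, fischer_X_mul_right, star_fischer]

lemma fischer_one_left (g : MvPolynomial σ ℂ) : fischer σ 1 g = g.coeff 0 := by
  rw [fischer_apply_of_subset support_one.subset, sum_singleton]
  simp [fischerWeight]

lemma fischer_self (f : MvPolynomial σ ℂ) :
    fischer σ f f = ((∑ m ∈ f.support, fischerWeight m * ‖f.coeff m‖ ^ 2 : ℝ) : ℂ) := by
  rw [fischer_apply_of_subset subset_rfl, Complex.ofReal_sum]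
  refine sum_congr rfl fun m _ => ?_
  rw [mul_assoc, Complex.star_def, ← Complex.normSq_eq_conj_mul_self, Complex.normSq_eq_norm_sq]
  push_cast
  ring

lemma norm_fischer_sq_le (f g : MvPolynomial σ ℂ) :
    ‖fischer σ f g‖ ^ 2 ≤ ‖fischer σ f f‖ * ‖fischer σ g g‖ := by
  classical
  set T := f.support ∪ g.support
  have hsub (h : MvPolynomial σ ℂ) (hT : h.support ⊆ T) :
      ‖fischer σ h h‖ = ∑ m ∈ T, fischerWeight m * ‖h.coeff m‖ ^ 2 := by
    rw [fischer_self, Complex.norm_real, Real.norm_of_nonneg (by positivity)]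
    exact sum_subset hT fun m _ hm => by simp [notMem_support_iff.mp hm]
  have htri : ‖fischer σ f g‖ ≤ ∑ m ∈ T, fischerWeight m * (‖f.coeff m‖ * ‖g.coeff m‖) := by
    rw [fischer_apply_of_subset subset_union_left]
    refine (norm_sum_le _ _).trans (le_of_eq (sum_congr rfl fun m _ => ?_))
    rw [norm_mul, norm_mul, norm_star, Complex.norm_natCast, mul_assoc]
  rw [hsub f subset_union_left, hsub g subset_union_right]
  refine (pow_le_pow_left₀ (norm_nonneg _) htri 2).trans
    (sum_sq_le_sum_mul_sum_of_sq_le_mul T (fun _ _ => by positivity)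
      (fun _ _ => by positivity) fun _ _ => le_of_eq (by ring))

end Fischer

section LinearForm

variable {σ : Type*} [Fintype σ]

noncomputable def linearForm (c : σ → ℂ) : MvPolynomial σ ℂ := ∑ v, C (c v) * X v

noncomputable def dirDeriv (c : σ → ℂ) : Derivation ℂ (MvPolynomial σ ℂ) (MvPolynomial σ ℂ) :=
  ∑ v, c v • pderiv v

lemma dirDeriv_apply (c : σ → ℂ) (f : MvPolynomial σ ℂ) :
    dirDeriv c f = ∑ v, c v • pderiv v f := by
  rw [dirDeriv, ← Derivation.coeFnAddMonoidHom_apply, map_sum, Finset.sum_apply]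
  rfl

lemma isHomogeneous_linearForm (c : σ → ℂ) : (linearForm c).IsHomogeneous 1 :=
  IsHomogeneous.sum _ _ _ fun v _ => isHomogeneous_C_mul_X (c v) v

lemma pderiv_linearForm [DecidableEq σ] (c : σ → ℂ) (v : σ) :
    pderiv v (linearForm c) = C (c v) := by
  simp [linearForm, pderiv_X, Pi.single_apply]

lemma dirDeriv_linearForm (d c : σ → ℂ) : dirDeriv d (linearForm c) = C (d ⬝ᵥ c) := by
  classical
  simp [dirDeriv_apply, pderiv_linearForm, dotProduct, C_mul']

lemma fischer_linearForm_mul_left (c : σ → ℂ) (f g : MvPolynomial σ ℂ) :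
    fischer σ (linearForm c * f) g = fischer σ f (dirDeriv (star c) g) := by
  rw [linearForm, sum_mul, map_sum, LinearMap.sum_apply, dirDeriv_apply, map_sum]
  refine sum_congr rfl fun v _ => ?_
  rw [mul_assoc, C_mul', LinearMap.map_smulₛₗ₂, fischer_X_mul_left, map_smul]
  rfl

end LinearForm

section DoubledVariables

variable {n : ℕ}

-- Polynomials in `z₁, …, zₙ` and `z̄₁, …, z̄ₙ` as independent variables `Sum.inl i`, `Sum.inr i`.
abbrev DoubledPoly (n : ℕ) := MvPolynomial (Fin n ⊕ Fin n) ℂ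

variable (n) in
noncomputable def normSqPoly : DoubledPoly n := ∑ i, X (Sum.inl i) * X (Sum.inr i)

-- `holForm x = ⟨z, x⟩ = ∑ zᵢ x̄ᵢ`, and `antiForm x = ∑ xᵢ z̄ᵢ` is its conjugate.
noncomputable def holForm (x : Fin n → ℂ) : DoubledPoly n := linearForm (Sum.elim (star x) 0)

noncomputable def antiForm (x : Fin n → ℂ) : DoubledPoly n := linearForm (Sum.elim 0 x)

variable (n) in
noncomputable def laplacian : Module.End ℂ (DoubledPoly n) :=
  ∑ i, (pderiv (Sum.inr i)).toLinearMap ∘ₗ (pderiv (Sum.inl i)).toLinearMap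

lemma laplacian_apply (f : DoubledPoly n) :
    laplacian n f = ∑ i, pderiv (Sum.inr i) (pderiv (Sum.inl i) f) := by
  simp [laplacian]

lemma pderiv_inl_normSqPoly (i : Fin n) : pderiv (Sum.inl i) (normSqPoly n) = X (Sum.inr i) := by
  simp [normSqPoly, pderiv_X, Pi.single_apply]

lemma pderiv_inr_normSqPoly (i : Fin n) : pderiv (Sum.inr i) (normSqPoly n) = X (Sum.inl i) := by
  simp [normSqPoly, pderiv_X, Pi.single_apply]

lemma isHomogeneous_normSqPoly : (normSqPoly n).IsHomogeneous 2 :=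
  IsHomogeneous.sum _ _ _ fun _ _ => (isHomogeneous_X ℂ _).mul (isHomogeneous_X ℂ _)

lemma fischer_normSqPoly_mul_left (f g : DoubledPoly n) :
    fischer _ (normSqPoly n * f) g = fischer _ f (laplacian n g) := by
  simp only [normSqPoly, sum_mul, map_sum, LinearMap.sum_apply, laplacian_apply, mul_assoc,
    fischer_X_mul_left]

lemma laplacian_normSqPoly_mul {f : DoubledPoly n} {d : ℕ} (hf : f.IsHomogeneous d) :
    laplacian n (normSqPoly n * f) =
      normSqPoly n * laplacian n f + ((n + d : ℕ) : DoubledPoly n) * f := by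
  have euler : ∑ i, (X (Sum.inl i) * pderiv (Sum.inl i) f + X (Sum.inr i) * pderiv (Sum.inr i) f) =
      (d : DoubledPoly n) * f := by
    rw [sum_add_distrib, ← Fintype.sum_sum_type fun v => X v * pderiv v f, hf.sum_X_mul_pderiv,
      nsmul_eq_mul]
  have hterm (i : Fin n) : pderiv (Sum.inr i) (pderiv (Sum.inl i) (normSqPoly n * f)) =
      f + (X (Sum.inl i) * pderiv (Sum.inl i) f + X (Sum.inr i) * pderiv (Sum.inr i) f) +
        normSqPoly n * pderiv (Sum.inr i) (pderiv (Sum.inl i) f) := by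
    simp only [Derivation.leibniz, pderiv_inl_normSqPoly, pderiv_inr_normSqPoly, pderiv_X_self,
      smul_eq_mul, map_add]
    ring
  simp only [laplacian_apply, hterm, sum_add_distrib, euler, ← mul_sum, sum_const, card_univ,
    Fintype.card_fin, nsmul_eq_mul]
  push_cast
  ring

lemma laplacian_normSqPoly_pow_mul {f : DoubledPoly n} {d : ℕ} (hf : f.IsHomogeneous d) (j : ℕ) :
    laplacian n (normSqPoly n ^ j * f) =
      ((j * (n + d + j - 1) : ℕ) : DoubledPoly n) * (normSqPoly n ^ (j - 1) * f) +
        normSqPoly n ^ j * laplacian n f := by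
  induction j with
  | zero => simp
  | succ j ih =>
    rw [pow_succ', mul_assoc, laplacian_normSqPoly_mul ((isHomogeneous_normSqPoly.pow j).mul hf),
      ih]
    rcases j with _ | j
    · simp [add_comm]
    · rw [show j + 1 + 1 - 1 = j + 1 from rfl,
        show n + d + (j + 1 + 1) - 1 = n + d + j + 1 by omega,
        show n + d + (j + 1) - 1 = n + d + j by omega, pow_succ' _ j]
      push_cast
      ring

lemma isHomogeneous_holForm_pow_mul_antiForm_pow (x : Fin n → ℂ) (a b : ℕ) :
    (holForm x ^ a * antiForm x ^ b).IsHomogeneous (a + b) := by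
  simpa [holForm, antiForm] using
    ((isHomogeneous_linearForm _).pow a).mul ((isHomogeneous_linearForm _).pow b)

lemma laplacian_holForm_pow_mul_antiForm_pow (x : Fin n → ℂ) (a b : ℕ) :
    laplacian n (holForm x ^ a * antiForm x ^ b) =
      C (a * b * (x ⬝ᵥ star x)) * (holForm x ^ (a - 1) * antiForm x ^ (b - 1)) := by
  simp only [laplacian_apply, holForm, antiForm, pderiv_mul, pderiv_pow, pderiv_linearForm,
    Sum.elim_inl, Sum.elim_inr, Pi.zero_apply, map_zero, Derivation.map_natCast, pderiv_C,
    mul_zero, zero_mul, add_zero, zero_add, dotProduct]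
  rw [mul_sum, map_sum, sum_mul]
  refine sum_congr rfl fun i _ => ?_
  simp only [map_mul, map_natCast, Pi.star_apply]
  ring

lemma fischer_holForm_mul_left (x : Fin n → ℂ) (f g : DoubledPoly n) :
    fischer _ (holForm x * f) g = fischer _ f (dirDeriv (Sum.elim x 0) g) := by
  rw [holForm, fischer_linearForm_mul_left, Function.star_sumElim, star_star, star_zero]

lemma fischer_antiForm_mul_left (x : Fin n → ℂ) (f g : DoubledPoly n) :
    fischer _ (antiForm x * f) g = fischer _ f (dirDeriv (Sum.elim 0 (star x)) g) := by
  rw [antiForm, fischer_linearForm_mul_left, Function.star_sumElim, star_zero]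

lemma dirDeriv_holForm_pow_succ_mul (x y : Fin n → ℂ) (a b : ℕ) :
    dirDeriv (Sum.elim x 0) (holForm y ^ (a + 1) * antiForm y ^ b) =
      C ((a + 1) * (x ⬝ᵥ star y)) * (holForm y ^ a * antiForm y ^ b) := by
  simp only [Derivation.leibniz, Derivation.leibniz_pow, holForm, antiForm, dirDeriv_linearForm,
    sumElim_dotProduct_sumElim, zero_dotProduct, dotProduct_zero, add_zero, map_zero, smul_eq_mul,
    nsmul_eq_mul, add_tsub_cancel_right, map_mul, map_add, map_one, map_natCast]
  push_cast
  ring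

lemma dirDeriv_antiForm_pow_succ_mul (x y : Fin n → ℂ) (a b : ℕ) :
    dirDeriv (Sum.elim 0 (star x)) (holForm y ^ a * antiForm y ^ (b + 1)) =
      C ((b + 1) * star (x ⬝ᵥ star y)) * (holForm y ^ a * antiForm y ^ b) := by
  simp only [Derivation.leibniz, Derivation.leibniz_pow, holForm, antiForm, dirDeriv_linearForm,
    sumElim_dotProduct_sumElim, zero_dotProduct, dotProduct_zero, zero_add, map_zero, smul_eq_mul,
    nsmul_eq_mul, add_tsub_cancel_right, map_mul, map_add, map_one, map_natCast]
  rw [Matrix.star_dotProduct, dotProduct_comm]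
  push_cast
  ring

lemma fischer_holForm_pow_mul_antiForm_pow (x y : Fin n → ℂ) (a b : ℕ) :
    fischer _ (holForm x ^ a * antiForm x ^ b) (holForm y ^ a * antiForm y ^ b) =
      a.factorial * b.factorial * (x ⬝ᵥ star y) ^ a * star (x ⬝ᵥ star y) ^ b := by
  induction a with
  | zero =>
    induction b with
    | zero => simp [fischer_one_left]
    | succ b ih =>
      rw [show holForm x ^ 0 * antiForm x ^ (b + 1) = antiForm x * (holForm x ^ 0 * antiForm x ^ b)
        by ring, fischer_antiForm_mul_left, dirDeriv_antiForm_pow_succ_mul, C_mul', map_smul, ih,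
        smul_eq_mul, Nat.factorial_succ]
      push_cast
      ring
  | succ a ih =>
    rw [pow_succ', mul_assoc, fischer_holForm_mul_left, dirDeriv_holForm_pow_succ_mul, C_mul',
      map_smul, ih, smul_eq_mul, Nat.factorial_succ]
    push_cast
    ring

lemma fischer_normSqPoly_pow_mul {y : Fin n → ℂ} (hy : y ⬝ᵥ star y = 1) (x : Fin n → ℂ)
    (j a b : ℕ) :
    fischer _ (normSqPoly n ^ j * (holForm x ^ a * antiForm x ^ b))
        (holForm y ^ (a + j) * antiForm y ^ (b + j)) =
      (a + j).factorial * (b + j).factorial * (x ⬝ᵥ star y) ^ a * star (x ⬝ᵥ star y) ^ b := by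
  induction j with
  | zero => simpa using fischer_holForm_pow_mul_antiForm_pow x y a b
  | succ j ih =>
    rw [pow_succ', mul_assoc, fischer_normSqPoly_mul_left, laplacian_holForm_pow_mul_antiForm_pow,
      ← add_assoc, ← add_assoc, Nat.add_sub_cancel, Nat.add_sub_cancel, hy, C_mul', map_smul, ih,
      smul_eq_mul, Nat.factorial_succ, Nat.factorial_succ]
    push_cast
    ring

end DoubledVariables

noncomputable def hypCoeff (α p q j : ℕ) : ℝ :=
  ((ascPochhammer ℝ j).eval (-(p : ℝ)) * (ascPochhammer ℝ j).eval (-(q : ℝ))) /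
    ((ascPochhammer ℝ j).eval (-(α : ℝ) - p - q) * (j.factorial : ℝ))

lemma ascPochhammer_eval_neg_natCast (N j : ℕ) :
    (ascPochhammer ℝ j).eval (-(N : ℝ)) = (-1) ^ j * N.descFactorial j := by
  rw [ascPochhammer_eval_neg_eq_descPochhammer, descPochhammer_eval_eq_descFactorial]

lemma hypCoeff_eq (α p q j : ℕ) :
    hypCoeff α p q j = (-1) ^ j * p.descFactorial j * q.descFactorial j /
      ((α + p + q).descFactorial j * j.factorial) := by
  rw [hypCoeff, show -(α : ℝ) - p - q = -((α + p + q : ℕ) : ℝ) by push_cast; ring,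
    ascPochhammer_eval_neg_natCast, ascPochhammer_eval_neg_natCast, ascPochhammer_eval_neg_natCast]
  calc _ = (-1 : ℝ) ^ j * ((-1) ^ j * p.descFactorial j * q.descFactorial j) /
        ((-1) ^ j * ((α + p + q).descFactorial j * j.factorial)) := by ring
    _ = _ := mul_div_mul_left _ _ (pow_ne_zero j (by norm_num))

lemma hypCoeff_zero (α p q : ℕ) : hypCoeff α p q 0 = 1 := by simp [hypCoeff]

lemma hypCoeff_succ_mul_add (α p q : ℕ) {j : ℕ} (hj : j < α + p + q) :
    hypCoeff α p q (j + 1) * ((j + 1) * (α + p + q - j) : ℕ) +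
      hypCoeff α p q j * ((p - j) * (q - j) : ℕ) = 0 := by
  have hN : ((α + p + q).descFactorial j : ℝ) ≠ 0 :=
    Nat.cast_ne_zero.mpr (Nat.descFactorial_eq_zero_iff_lt.not.mpr (by omega))
  have hNj : ((α + p + q - j : ℕ) : ℝ) ≠ 0 := Nat.cast_ne_zero.mpr (by omega)
  rw [hypCoeff_eq, hypCoeff_eq, Nat.descFactorial_succ, Nat.descFactorial_succ,
    Nat.descFactorial_succ, Nat.factorial_succ]
  push_cast
  field_simp
  ring

noncomputable def discNormalizer (α p q : ℕ) : ℝ :=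
  (ascPochhammer ℝ (p + q)).eval ((α : ℝ) + 1) /
    ((ascPochhammer ℝ p).eval ((α : ℝ) + 1) * (ascPochhammer ℝ q).eval ((α : ℝ) + 1))

lemma discNormalizer_eq (α p q : ℕ) : discNormalizer α p q =
    (α + p + q).factorial * α.factorial / ((α + p).factorial * (α + q).factorial) := by
  have h (k : ℕ) : (ascPochhammer ℝ k).eval ((α : ℝ) + 1) = (α + k).factorial / α.factorial := by
    rw [← factorial_mul_ascPochhammer ℝ α k, mul_div_cancel_left₀ _ (by positivity)]
  rw [discNormalizer, h, h, h, ← add_assoc]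
  field_simp

-- Chu–Vandermonde for `Ring.choose (p + (-(α + p + 1))) q`, after negating the upper arguments.
lemma sum_neg_one_pow_mul_choose_mul_choose (α p q : ℕ) :
    ∑ j ∈ range (min p q + 1), (-1 : ℤ) ^ j * p.choose j * (α + p + q - j).choose (q - j) =
      (α + q).choose q := by
  have key := Ring.add_choose_eq (r := (p : ℤ)) (s := -((α + p + 1 : ℕ) : ℤ)) q (Commute.all _ _)
  have hterm : ∀ j ∈ range q.succ,
      Ring.choose (p : ℤ) (j, q - j).1 * Ring.choose (-((α + p + 1 : ℕ) : ℤ)) (j, q - j).2 =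
        (-1) ^ q * ((-1 : ℤ) ^ j * p.choose j * (α + p + q - j).choose (q - j)) := by
    intro j hj
    have hjq : j ≤ q := Nat.lt_succ_iff.mp (mem_range.mp hj)
    have hsign : (-1 : ℤ) ^ q * (-1) ^ j = (-1) ^ (q - j) := by
      rw [← pow_add, show q + j = q - j + 2 * j by omega, pow_add, pow_mul, neg_one_sq, one_pow,
        mul_one]
    rw [Ring.choose_natCast, Ring.choose_neg, show ((α + p + 1 : ℕ) : ℤ) + ((q - j : ℕ) : ℤ) - 1 =
      ((α + p + q - j : ℕ) : ℤ) by push_cast [hjq]; omega, Ring.choose_natCast, Units.smul_def,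
      Int.coe_negOnePow_natCast, ← hsign]
    ring
  rw [show (p : ℤ) + -((α + p + 1 : ℕ) : ℤ) = -((α + 1 : ℕ) : ℤ) by push_cast; ring,
    Nat.sum_antidiagonal_eq_sum_range_succ_mk, sum_congr rfl hterm, ← mul_sum, Ring.choose_neg,
    show ((α + 1 : ℕ) : ℤ) + q - 1 = ((α + q : ℕ) : ℤ) by push_cast; ring, Ring.choose_natCast,
    Units.smul_def, Int.coe_negOnePow_natCast, smul_eq_mul,
    ← sum_subset (range_subset_range.mpr (by omega : min p q + 1 ≤ q.succ))
      fun j hj hj' => by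
        rw [Nat.choose_eq_zero_of_lt (by simp only [mem_range] at hj hj'; omega)]; simp] at key
  exact (mul_left_cancel₀ (pow_ne_zero q (by norm_num)) key).symm

lemma hypCoeff_eq_choose (α p q : ℕ) {j : ℕ} (hjp : j ≤ p) (hjq : j ≤ q) :
    hypCoeff α p q j = (-1) ^ j * p.choose j * (α + p + q - j).choose (q - j) *
      (q.factorial * (α + p).factorial / (α + p + q).factorial) := by
  have hp : (p.descFactorial j : ℝ) = j.factorial * p.choose j := by
    exact_mod_cast Nat.descFactorial_eq_factorial_mul_choose p j
  have hq : ((q - j).factorial : ℝ) * q.descFactorial j = q.factorial := by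
    exact_mod_cast Nat.factorial_mul_descFactorial hjq
  have hN : ((α + p + q - j).factorial : ℝ) * (α + p + q).descFactorial j =
      (α + p + q).factorial := by
    exact_mod_cast Nat.factorial_mul_descFactorial (by omega : j ≤ α + p + q)
  have hC : ((α + p + q - j).choose (q - j) : ℝ) * (q - j).factorial * (α + p).factorial =
      (α + p + q - j).factorial := by
    have h := Nat.choose_mul_factorial_mul_factorial (by omega : q - j ≤ α + p + q - j)
    rw [show α + p + q - j - (q - j) = α + p by omega] at h
    exact_mod_cast h
  have hC0 : ((α + p + q - j).choose (q - j) : ℝ) ≠ 0 :=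
    Nat.cast_ne_zero.mpr (Nat.choose_pos (by omega)).ne'
  have hN0 : ((α + p + q).descFactorial j : ℝ) ≠ 0 :=
    Nat.cast_ne_zero.mpr (Nat.descFactorial_eq_zero_iff_lt.not.mpr (by omega))
  rw [hypCoeff_eq, hp, ← hq, ← hN, ← hC]
  field_simp

lemma discNormalizer_mul_sum_hypCoeff (α p q : ℕ) :
    discNormalizer α p q * ∑ j ∈ range (min p q + 1), hypCoeff α p q j = 1 := by
  have hsum : ∑ j ∈ range (min p q + 1), hypCoeff α p q j =
      (α + q).choose q * (q.factorial * (α + p).factorial / (α + p + q).factorial) := by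
    rw [sum_congr rfl fun j hj => hypCoeff_eq_choose α p q
      (by simp only [mem_range] at hj; omega) (by simp only [mem_range] at hj; omega), ← sum_mul]
    exact_mod_cast congrArg (fun z : ℤ => (z : ℝ) * _) (sum_neg_one_pow_mul_choose_mul_choose α p q)
  have hC : ((α + q).choose q : ℝ) * q.factorial * α.factorial = (α + q).factorial := by
    have h := Nat.choose_mul_factorial_mul_factorial (Nat.le_add_left q α)
    rw [Nat.add_sub_cancel] at h
    exact_mod_cast h
  have hC0 : ((α + q).choose q : ℝ) ≠ 0 := Nat.cast_ne_zero.mpr (Nat.choose_pos (by omega)).ne'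
  rw [hsum, discNormalizer_eq, ← hC]
  field_simp

-- `w^p w̄^q ₂F₁(-p, -q; -α-p-q; 1/|w|²)`
noncomputable def discHyp (α p q : ℕ) (w : ℂ) : ℂ :=
  ∑ i ∈ Finset.range (min p q + 1),
    ((hypCoeff α p q i : ℝ) : ℂ) * w ^ (p - i) * ((starRingEnd ℂ) w) ^ (q - i)

lemma discW_eq_mul (α p q : ℕ) (w : ℂ) :
    discW α p q w = (discNormalizer α p q : ℂ) * discHyp α p q w := rfl

lemma discW_one (α p q : ℕ) : discW α p q 1 = 1 := by
  simp only [discW_eq_mul, discHyp, map_one, one_pow, mul_one, ← Complex.ofReal_sum,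
    ← Complex.ofReal_mul, discNormalizer_mul_sum_hypCoeff, Complex.ofReal_one]

noncomputable def zonal (α p q : ℕ) (x : Fin (α + 2) → ℂ) : DoubledPoly (α + 2) :=
  ∑ j ∈ range (min p q + 1), C (hypCoeff α p q j : ℂ) *
    (normSqPoly (α + 2) ^ j * (holForm x ^ (p - j) * antiForm x ^ (q - j)))

section Zonal

variable {α : ℕ}

lemma laplacian_zonal {x : Fin (α + 2) → ℂ} (hx : x ⬝ᵥ star x = 1) (p q : ℕ) :
    laplacian _ (zonal α p q x) = 0 := by
  set S := normSqPoly (α + 2)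
  have hterm (j : ℕ) : laplacian _ (C (hypCoeff α p q j : ℂ) *
      (S ^ j * (holForm x ^ (p - j) * antiForm x ^ (q - j)))) =
      C ((hypCoeff α p q j * (j * (α + 2 + (p - j + (q - j)) + j - 1) : ℕ) : ℝ) : ℂ) *
          (S ^ (j - 1) * (holForm x ^ (p - j) * antiForm x ^ (q - j))) +
        C ((hypCoeff α p q j * ((p - j) * (q - j) : ℕ) : ℝ) : ℂ) *
          (S ^ j * (holForm x ^ (p - j - 1) * antiForm x ^ (q - j - 1))) := by
    rw [C_mul', map_smul,
      laplacian_normSqPoly_pow_mul (isHomogeneous_holForm_pow_mul_antiForm_pow x _ _),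
      laplacian_holForm_pow_mul_antiForm_pow, hx]
    simp only [smul_eq_C_mul, map_mul, map_natCast, Complex.ofReal_mul, Complex.ofReal_natCast,
      Nat.cast_mul, mul_one]
    ring
  rw [zonal, map_sum, sum_congr rfl fun j _ => hterm j]
  refine sum_range_succ_add_eq_zero (by simp) ?_ fun j hj => ?_
  · rcases min_choice p q with h | h <;> simp [h]
  · have hjp : j < p := lt_of_lt_of_le hj (min_le_left p q)
    have hjq : j < q := lt_of_lt_of_le hj (min_le_right p q)
    rw [show (j + 1) * (α + 2 + (p - (j + 1) + (q - (j + 1))) + (j + 1) - 1) =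
      (j + 1) * (α + p + q - j) by congr 1; omega, Nat.add_sub_cancel, Nat.sub_add_eq,
      Nat.sub_add_eq, ← add_mul, ← map_add, ← Complex.ofReal_add,
      hypCoeff_succ_mul_add α p q (by omega), Complex.ofReal_zero, map_zero, zero_mul]

lemma fischer_zonal_right {F : DoubledPoly (α + 2)} (hF : laplacian _ F = 0) (p q : ℕ)
    (y : Fin (α + 2) → ℂ) :
    fischer _ F (zonal α p q y) = fischer _ F (holForm y ^ p * antiForm y ^ q) := by
  have hvanish (j : ℕ) (G : DoubledPoly (α + 2)) :
      fischer _ F (normSqPoly _ ^ (j + 1) * G) = 0 := by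
    rw [pow_succ', mul_assoc, ← star_fischer, fischer_normSqPoly_mul_left, hF, map_zero, star_zero]
  rw [zonal, map_sum, sum_range_succ']
  simp only [C_mul', map_smul, hvanish, smul_zero, sum_const_zero, zero_add, hypCoeff_zero,
    Complex.ofReal_one, one_smul, pow_zero, one_mul, Nat.sub_zero]

lemma fischer_zonal_left {y : Fin (α + 2) → ℂ} (hy : y ⬝ᵥ star y = 1) (p q : ℕ)
    (x : Fin (α + 2) → ℂ) :
    fischer _ (zonal α p q x) (holForm y ^ p * antiForm y ^ q) =
      p.factorial * q.factorial * discHyp α p q (x ⬝ᵥ star y) := by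
  rw [zonal, map_sum, LinearMap.sum_apply, discHyp, mul_sum]
  refine sum_congr rfl fun j hj => ?_
  have hjp : j ≤ p := by simp only [mem_range] at hj; omega
  have hjq : j ≤ q := by simp only [mem_range] at hj; omega
  have hshift : holForm y ^ p * antiForm y ^ q =
      holForm y ^ (p - j + j) * antiForm y ^ (q - j + j) := by
    rw [Nat.sub_add_cancel hjp, Nat.sub_add_cancel hjq]
  rw [C_mul', LinearMap.map_smulₛₗ₂, hshift, fischer_normSqPoly_pow_mul hy, Nat.sub_add_cancel hjp,
    Nat.sub_add_cancel hjq, Complex.conj_ofReal, smul_eq_mul, starRingEnd_apply]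
  ring

end Zonal

lemma exists_dotProduct_star_eq {k : ℕ} {w : ℂ} (hw : ‖w‖ ≤ 1) :
    ∃ x y : Fin (k + 2) → ℂ, x ⬝ᵥ star x = 1 ∧ y ⬝ᵥ star y = 1 ∧ x ⬝ᵥ star y = w := by
  set s : ℂ := ((Real.sqrt (1 - ‖w‖ ^ 2) : ℝ) : ℂ)
  have hs : s * (starRingEnd ℂ) s = 1 - (starRingEnd ℂ) w * w := by
    rw [Complex.mul_conj, mul_comm, Complex.mul_conj, Complex.normSq_eq_norm_sq,
      Complex.normSq_eq_norm_sq, Complex.norm_real, Real.norm_of_nonneg (Real.sqrt_nonneg _),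
      Real.sq_sqrt (by nlinarith [norm_nonneg w])]
    push_cast; ring
  refine ⟨Pi.single 0 1, Pi.single 0 (star w) + Pi.single 1 s, by simp, ?_, by simp⟩
  simp only [add_dotProduct, single_dotProduct, Pi.star_apply, Pi.add_apply]
  simp [hs]

lemma fischer_zonal {α : ℕ} {x y : Fin (α + 2) → ℂ} (hx : x ⬝ᵥ star x = 1)
    (hy : y ⬝ᵥ star y = 1) (p q : ℕ) :
    fischer _ (zonal α p q x) (zonal α p q y) =
      p.factorial * q.factorial * discHyp α p q (x ⬝ᵥ star y) := by
  rw [fischer_zonal_right (laplacian_zonal hx p q), fischer_zonal_left hy]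

lemma norm_discHyp_le (α p q : ℕ) {w : ℂ} (hw : ‖w‖ ≤ 1) :
    ‖discHyp α p q w‖ ≤ ‖discHyp α p q 1‖ := by
  obtain ⟨x, y, hx, hy, rfl⟩ := exists_dotProduct_star_eq (k := α) hw
  have hcs := norm_fischer_sq_le (zonal α p q x) (zonal α p q y)
  rw [fischer_zonal hx hy, fischer_zonal hx hx, fischer_zonal hy hy, hx, hy, ← sq,
    pow_le_pow_iff_left₀ (norm_nonneg _) (norm_nonneg _) two_ne_zero, norm_mul,
    norm_mul _ (discHyp α p q 1)] at hcs
  exact le_of_mul_le_mul_left hcs (norm_pos_iff.mpr (by simp [Nat.factorial_ne_zero]))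

end DiscPolynomial

open DiscPolynomial

/-- Disc polynomials are bounded by 1 on the closed unit disc and equal 1 at w = 1. -/
theorem discW_bound (α p q : ℕ) :
    (∀ w : ℂ, ‖w‖ ≤ 1 → ‖discW α p q w‖ ≤ 1) ∧ discW α p q 1 = 1 := by
  refine ⟨fun w hw => ?_, discW_one α p q⟩
  calc ‖discW α p q w‖ = ‖(discNormalizer α p q : ℂ)‖ * ‖discHyp α p q w‖ := by
        rw [discW_eq_mul, norm_mul]
    _ ≤ ‖(discNormalizer α p q : ℂ)‖ * ‖discHyp α p q 1‖ := by
        gcongr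
        exact norm_discHyp_le α p q hw
    _ = 1 := by rw [← norm_mul, ← discW_eq_mul, discW_one, norm_one]
end

section
/- Let α ≥ 0 be an integer, p, q nonnegative integers, m = min(p,q), and define W^α_{k,j} as the disc polynomials and γ_k^{p,q} = [p! q! (α+1+p+q-2k)(α+p-k)!(α+q-k)!] / [k! α! (α+1+p+q-k)! (p-k)! (q-k)!]. Then for every w in the closed unit disc, w^p w̄^q = Σ_{k=0}^{m} γ_k^{p,q} · W^α_{p-k,q-k}(w). -/
open Finset Nat

section CharZeroField

variable {K : Type*} [Field K] [CharZero K]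

theorem sum_range_alternating_choose_mul_factorial_div (j X : ℕ) :
    ∑ l ∈ range (j + 1), (-1 : K) ^ l * j.choose l * ((X + 1 + 2 * l : ℕ) : K) *
        ((X + l)! / (X + j + 1 + l)! : K) = if j = 0 then 1 else 0 := by
  -- Gosper's certificate: `j` times the `l`-th summand is `T l - T (l + 1)`.
  set T : ℕ → K := fun l ↦ (-1) ^ l * l * j.choose l * ((X + l)! / (X + j + l)! : K)
  have telescope : ∀ l ∈ range (j + 1), (j : K) * ((-1 : K) ^ l * j.choose l *
      ((X + 1 + 2 * l : ℕ) : K) * ((X + l)! / (X + j + 1 + l)! : K)) = T l - T (l + 1) := by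
    intro l hl
    have hlj : l ≤ j := Nat.lt_succ_iff.mp (mem_range.mp hl)
    have hchoose : ((l : K) + 1) * j.choose (l + 1) = (j - l) * j.choose l := by
      rw [← Nat.cast_sub hlj]
      exact_mod_cast by rw [mul_comm, Nat.choose_succ_right_eq, mul_comm]
    simp only [T]
    rw [show X + (l + 1) = X + l + 1 by ring, show X + j + (l + 1) = X + j + l + 1 by ring,
      show X + j + 1 + l = X + j + l + 1 by ring, Nat.factorial_succ (X + l),
      Nat.factorial_succ (X + j + l)]
    have hB : ((X + j + l)! : K) ≠ 0 := Nat.cast_ne_zero.mpr (factorial_ne_zero _)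
    have hS : (X : K) + j + l + 1 ≠ 0 := by exact_mod_cast succ_ne_zero (X + j + l)
    push_cast
    generalize ((X + l)! : K) = A at *
    generalize ((X + j + l)! : K) = B at *
    field_simp
    linear_combination -(-1 : K) ^ l * (X + l + 1 : K) * A * hchoose
  rcases Nat.eq_zero_or_pos j with rfl | hj
  · have hX : (X ! : K) ≠ 0 := Nat.cast_ne_zero.mpr (factorial_ne_zero X)
    simp [Nat.factorial_succ, field]
  · rw [if_neg hj.ne', ← mul_right_inj' (Nat.cast_ne_zero.mpr hj.ne' : (j : K) ≠ 0), mul_sum,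
      sum_congr rfl telescope, sum_range_sub']
    simp [T]

theorem ascPochhammer_eval_natCast_add_one (r n : ℕ) :
    (ascPochhammer K n).eval ((r : K) + 1) = (r + n)! / r ! := by
  rw [eq_div_iff (Nat.cast_ne_zero.mpr (factorial_ne_zero _)), mul_comm, factorial_mul_ascPochhammer]

theorem ascPochhammer_eval_neg_natCast_add (n i : ℕ) :
    (ascPochhammer K i).eval (-((n + i : ℕ) : K)) = (-1) ^ i * (n + i)! / n ! := by
  rw [ascPochhammer_eval_neg_eq_descPochhammer, descPochhammer_eval_eq_descFactorial,
    add_descFactorial_eq_ascFactorial, ← factorial_mul_ascFactorial n i, Nat.cast_mul, mul_div_assoc,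
    mul_div_cancel_left₀ _ (Nat.cast_ne_zero.mpr (factorial_ne_zero _))]

end CharZeroField

noncomputable def discCoeff (α a b i : ℕ) : ℝ :=
  (ascPochhammer ℝ (a + b)).eval ((α : ℝ) + 1) /
      ((ascPochhammer ℝ a).eval ((α : ℝ) + 1) * (ascPochhammer ℝ b).eval ((α : ℝ) + 1)) *
    ((ascPochhammer ℝ i).eval (-(a : ℝ)) * (ascPochhammer ℝ i).eval (-(b : ℝ)) /
      ((ascPochhammer ℝ i).eval (-(α : ℝ) - a - b) * (i ! : ℝ)))

theorem discW_eq_sum (α a b : ℕ) (w : ℂ) :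
    discW α a b w = ∑ i ∈ range (min a b + 1),
      (discCoeff α a b i : ℂ) * (w ^ (a - i) * (starRingEnd ℂ) w ^ (b - i)) := by
  rw [discW, mul_sum]
  refine sum_congr rfl fun i _ ↦ ?_
  simp only [discCoeff]
  push_cast
  ring

theorem discCoeff_add_add (α u v i : ℕ) :
    discCoeff α (u + i) (v + i) i = (-1) ^ i * (α ! * (u + i)! * (v + i)! * (α + u + v + i)! /
      ((α + u + i)! * (α + v + i)! * u ! * v ! * i ! : ℝ)) := by
  rw [discCoeff, show -(α : ℝ) - ((u + i : ℕ) : ℝ) - ((v + i : ℕ) : ℝ) =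
    -((α + u + v + i + i : ℕ) : ℝ) by push_cast; ring]
  simp only [ascPochhammer_eval_natCast_add_one, ascPochhammer_eval_neg_natCast_add]
  rw [show α + (u + i + (v + i)) = α + u + v + i + i by ring, show α + (u + i) = α + u + i by ring,
    show α + (v + i) = α + v + i by ring]
  field_simp

/-- The coefficient `γ_k^{p,q}`. -/
noncomputable def discMonomialCoeff (α p q k : ℕ) : ℝ :=
  ((p ! * q ! * (α + 1 + (p - k) + (q - k)) * (α + (p - k))! * (α + (q - k))! : ℕ) : ℝ) /
    ((k ! * α ! * (α + 1 + (p - k) + q)! * (p - k)! * (q - k)! : ℕ) : ℝ)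

theorem discMonomialCoeff_mul_discCoeff (α u v j l : ℕ) (hl : l ≤ j) :
    discMonomialCoeff α (j + u) (j + v) (j - l) * discCoeff α (u + l) (v + l) l =
      (j + u)! * (j + v)! / (u ! * v ! * j ! : ℝ) * ((-1) ^ l * j.choose l *
        ((α + u + v + 1 + 2 * l : ℕ) : ℝ) * ((α + u + v + l)! / (α + u + v + j + 1 + l)! : ℝ)) := by
  rw [discMonomialCoeff, discCoeff_add_add, Nat.cast_choose ℝ hl,
    show j + u - (j - l) = u + l by omega, show j + v - (j - l) = v + l by omega,
    show α + 1 + (u + l) + (v + l) = α + u + v + 1 + 2 * l by ring,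
    show α + (u + l) = α + u + l by ring, show α + (v + l) = α + v + l by ring,
    show α + 1 + (u + l) + (j + v) = α + u + v + j + 1 + l by ring]
  push_cast
  field_simp

theorem sum_discMonomialCoeff_mul_discCoeff (α p q j : ℕ) (hj : j ≤ min p q) :
    ∑ k ∈ range (j + 1), discMonomialCoeff α p q k * discCoeff α (p - k) (q - k) (j - k) =
      if j = 0 then 1 else 0 := by
  obtain ⟨u, rfl⟩ := Nat.exists_eq_add_of_le (hj.trans (min_le_left p q))
  obtain ⟨v, rfl⟩ := Nat.exists_eq_add_of_le (hj.trans (min_le_right _ _))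
  rw [← sum_range_reflect]
  calc _ = ∑ l ∈ range (j + 1), (j + u)! * (j + v)! / (u ! * v ! * j ! : ℝ) * ((-1) ^ l *
          j.choose l * ((α + u + v + 1 + 2 * l : ℕ) : ℝ) *
          ((α + u + v + l)! / (α + u + v + j + 1 + l)! : ℝ)) := by
        refine sum_congr rfl fun l hl ↦ ?_
        have hlj : l ≤ j := Nat.lt_succ_iff.mp (mem_range.mp hl)
        rw [← discMonomialCoeff_mul_discCoeff α u v j l hlj, Nat.add_sub_cancel,
          show j + u - (j - l) = u + l by omega, show j + v - (j - l) = v + l by omega,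
          Nat.sub_sub_self hlj]
    _ = _ := by
        rw [← mul_sum, sum_range_alternating_choose_mul_factorial_div]
        split_ifs with hj0
        · subst hj0
          simp [field, Nat.factorial_ne_zero]
        · exact mul_zero _

theorem monomial_disc_expansion_general (α p q : ℕ) (w : ℂ) :
    w ^ p * ((starRingEnd ℂ) w) ^ q =
      ∑ k ∈ Finset.range (min p q + 1),
        ((((p.factorial * q.factorial * (α + 1 + (p - k) + (q - k)) *
              (α + (p - k)).factorial * (α + (q - k)).factorial : ℕ) : ℝ) /
            ((k.factorial * α.factorial * (α + 1 + (p - k) + q).factorial *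
              (p - k).factorial * (q - k).factorial : ℕ) : ℝ) : ℝ) : ℂ) *
          discW α (p - k) (q - k) w := by
  set m : ℕ → ℂ := fun j ↦ w ^ (p - j) * (starRingEnd ℂ) w ^ (q - j)
  calc w ^ p * (starRingEnd ℂ) w ^ q
      = ∑ j ∈ range (min p q + 1), (if j = 0 then 1 else 0) * m j := by simp [m]
    _ = ∑ j ∈ range (min p q + 1), ∑ k ∈ range (j + 1),
          (discMonomialCoeff α p q k * discCoeff α (p - k) (q - k) (j - k) : ℂ) * m j := by
        refine sum_congr rfl fun j hj ↦ ?_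
        have hjpq : j ≤ min p q := Nat.lt_succ_iff.mp (mem_range.mp hj)
        simp only [← sum_mul, ← Complex.ofReal_mul, ← Complex.ofReal_sum,
          sum_discMonomialCoeff_mul_discCoeff α p q j hjpq, apply_ite Complex.ofReal,
          Complex.ofReal_one, Complex.ofReal_zero]
    _ = ∑ k ∈ range (min p q + 1), ∑ i ∈ range (min p q + 1 - k),
          (discMonomialCoeff α p q k * discCoeff α (p - k) (q - k) i : ℂ) * m (k + i) := by
        rw [← sum_range_diag_flip]
        refine sum_congr rfl fun j _ ↦ sum_congr rfl fun k hk ↦ ?_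
        rw [Nat.add_sub_cancel' (Nat.lt_succ_iff.mp (mem_range.mp hk))]
    _ = ∑ k ∈ range (min p q + 1), (discMonomialCoeff α p q k : ℂ) * discW α (p - k) (q - k) w := by
        refine sum_congr rfl fun k hk ↦ ?_
        rw [discW_eq_sum, mul_sum,
          show min (p - k) (q - k) + 1 = min p q + 1 - k by have := mem_range.mp hk; omega]
        simp only [m, Nat.sub_sub, mul_assoc]

/-- Expansion of the monomial w^p w̄^q into disc polynomials. -/
theorem monomial_disc_expansion (α p q : ℕ) (w : ℂ) (hw : ‖w‖ ≤ 1) :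
    w ^ p * ((starRingEnd ℂ) w) ^ q =
      ∑ k ∈ Finset.range (min p q + 1),
        ((((p.factorial * q.factorial * (α + 1 + (p - k) + (q - k)) *
              (α + (p - k)).factorial * (α + (q - k)).factorial : ℕ) : ℝ) /
            ((k.factorial * α.factorial * (α + 1 + (p - k) + q).factorial *
              (p - k).factorial * (q - k).factorial : ℕ) : ℝ) : ℝ) : ℂ) *
          discW α (p - k) (q - k) w :=
  monomial_disc_expansion_general α p q w
end

section
/- Let n ≥ 2, η a unit vector in ℂⁿ, and p, q nonnegative integers with m = min(p,q) and α = n-2. Then for all z ∈ ℂⁿ, (z|η)^p (z|η)̄^q = Σ_{k=0}^{m} |z|^{2k} · [p! q! (α+1+p+q-2k)!] / [k! (p-k)! (q-k)! (α+1+p+q-k)!] · (z|η)^{p-k} (z|η)̄^{q-k} · Σ_{i=0}^{min(p,q)-k} [(-p+k)_i (-q+k)_i] / [(-α-p-q+2k)_i i!] · (|z|²/|(z|η)|²)^i, where the inner sum combined with the preceding powers is understood as the harmonic polynomial Σ_i [⋯] |z|^{2i} (z|η)^{p-k-i} (z|η)̄^{q-k-i} (polynomial, no division). -/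
/-!
Both sides are polynomials in `a = |z|²`, `w = (z|η)` and `w̄`, and the identity holds with these
treated as independent variables. Grouping the right-hand side by the total power `m` of `a`, the
coefficient of `a ^ m * w ^ (p - m) * w̄ ^ (q - m)` is the convolution `∑ k, C k * D k (m - k)` of the
outer and inner coefficients, so it suffices that this convolution is `1` for `m = 0` and `0`
otherwise. Evaluating the Pochhammer symbols at negative integers as signed descending factorials
turns the convolution into a multiple of
`∑ j, (-1) ^ j * m.choose j * (s + 2 j + 1) * (s + j)! / (s + m + j + 1)!`, `s = α + (p - m) + (q - m)`,
which telescopes to `0` for `m ≥ 1` (the antidifference is the one Gosper's algorithm finds).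
-/

open Finset Nat

noncomputable def zonalTerm (s m j : ℕ) : ℝ :=
  (-1) ^ j * m.choose j * (s + 2 * j + 1) * (s + j)! / (s + m + j + 1)!

noncomputable def zonalTermAntidiff (s m j : ℕ) : ℝ :=
  (-1) ^ (j + 1) * j * m.choose j * (s + j)! / (s + m + j)!

lemma mul_zonalTerm_eq_sub (s : ℕ) {m j : ℕ} (hj : j ≤ m) :
    m * zonalTerm s m j = zonalTermAntidiff s m (j + 1) - zonalTermAntidiff s m j := by
  have hchoose : (m.choose (j + 1) * (j + 1) : ℝ) = m.choose j * (m - j) := by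
    rw [← Nat.cast_sub hj]; exact_mod_cast m.choose_succ_right_eq j
  rw [zonalTerm, zonalTermAntidiff, zonalTermAntidiff, ← add_assoc, factorial_succ (s + j),
    ← add_assoc, factorial_succ (s + m + j)]
  push_cast
  field_simp
  linear_combination -(s + j + 1 : ℝ) * (-1) ^ j * hchoose

theorem sum_range_zonalTerm_eq_zero (s : ℕ) {m : ℕ} (hm : 0 < m) :
    ∑ j ∈ range (m + 1), zonalTerm s m j = 0 := by
  have htel : ∀ j ∈ range (m + 1),
      zonalTerm s m j = (zonalTermAntidiff s m (j + 1) - zonalTermAntidiff s m j) / m :=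
    fun j hj => by
      rw [eq_div_iff (by positivity), mul_comm, mul_zonalTerm_eq_sub s (mem_range_succ_iff.mp hj)]
  rw [sum_congr rfl htel, ← sum_div, sum_range_sub]
  simp [zonalTermAntidiff]

noncomputable def harmonicCoeff (α p q k : ℕ) : ℝ :=
  ((p ! * q ! * (α + 1 + (p - k) + (q - k))! : ℕ) : ℝ) /
    ((k ! * (p - k)! * (q - k)! * (α + 1 + (p - k) + q)! : ℕ) : ℝ)

noncomputable def zonalCoeff (α P Q i : ℕ) : ℝ :=
  (ascPochhammer ℝ i).eval (-(P : ℝ)) * (ascPochhammer ℝ i).eval (-(Q : ℝ)) /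
    ((ascPochhammer ℝ i).eval (-((α + P + Q : ℕ) : ℝ)) * (i ! : ℝ))

lemma cast_add_descFactorial {K : Type*} [Field K] [CharZero K] (a k : ℕ) :
    ((a + k).descFactorial k : K) = (a + k)! / a ! := by
  rw [eq_div_iff (mod_cast a.factorial_ne_zero), mul_comm]
  have h := (a + k).factorial_mul_descFactorial (Nat.le_add_left k a)
  rw [Nat.add_sub_cancel] at h
  exact_mod_cast h

lemma zonalCoeff_eq (α P Q i : ℕ) :
    zonalCoeff α P Q i =
      (-1) ^ i * P.descFactorial i * Q.descFactorial i / ((α + P + Q).descFactorial i * i !) := by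
  simp only [zonalCoeff, ascPochhammer_eval_neg_eq_descPochhammer,
    descPochhammer_eval_eq_descFactorial]
  field_simp

lemma harmonicCoeff_mul_zonalCoeff (α : ℕ) {p q m j : ℕ} (hj : j ≤ m) (hp : m ≤ p)
    (hq : m ≤ q) :
    harmonicCoeff α p q (m - j) * zonalCoeff α (p - (m - j)) (q - (m - j)) j =
      p.descFactorial m * q.descFactorial m / m ! * zonalTerm (α + (p - m) + (q - m)) m j := by
  obtain ⟨k, rfl⟩ := Nat.exists_eq_add_of_le' hj
  obtain ⟨a, rfl⟩ := Nat.exists_eq_add_of_le' hp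
  obtain ⟨b, rfl⟩ := Nat.exists_eq_add_of_le' hq
  have hk : k + j - j = k := by omega
  have hpa : a + (k + j) - k = a + j := by omega
  have hqb : b + (k + j) - k = b + j := by omega
  simp only [hk, hpa, hqb, Nat.add_sub_cancel, harmonicCoeff, zonalCoeff_eq, zonalTerm]
  rw [show α + (a + j) + (b + j) = (α + a + b + j) + j by ring, cast_add_descFactorial,
    cast_add_descFactorial, cast_add_descFactorial, cast_add_descFactorial,
    cast_add_descFactorial, Nat.cast_choose ℝ (Nat.le_add_left j k), hk,
    show α + 1 + (a + j) + (b + j) = (α + a + b + 2 * j) + 1 by ring,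
    factorial_succ (α + a + b + 2 * j),
    show α + 1 + (a + j) + (b + (k + j)) = α + a + b + (k + j) + j + 1 by ring,
    show α + a + b + j + j = α + a + b + 2 * j by ring]
  push_cast
  field_simp

theorem sum_harmonicCoeff_mul_zonalCoeff (α : ℕ) {p q m : ℕ} (hp : m ≤ p) (hq : m ≤ q) :
    ∑ k ∈ range (m + 1), harmonicCoeff α p q k * zonalCoeff α (p - k) (q - k) (m - k) =
      if m = 0 then 1 else 0 := by
  rw [← sum_range_reflect]
  have hterm : ∀ j ∈ range (m + 1),
      harmonicCoeff α p q (m + 1 - 1 - j) *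
          zonalCoeff α (p - (m + 1 - 1 - j)) (q - (m + 1 - 1 - j)) (m - (m + 1 - 1 - j)) =
        p.descFactorial m * q.descFactorial m / m ! * zonalTerm (α + (p - m) + (q - m)) m j :=
    fun j hj => by
      have hjm := mem_range_succ_iff.mp hj
      rw [Nat.add_sub_cancel, Nat.sub_sub_self hjm, harmonicCoeff_mul_zonalCoeff α hjm hp hq]
  rw [sum_congr rfl hterm, ← mul_sum]
  rcases Nat.eq_zero_or_pos m with rfl | hm
  · simp only [zero_add, sum_range_one, zonalTerm, descFactorial_zero, factorial_zero,
      choose_self, tsub_zero, add_zero, pow_zero, factorial_succ, if_pos]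
    push_cast
    field_simp
    ring
  · rw [sum_range_zonalTerm_eq_zero _ hm, mul_zero, if_neg hm.ne']

lemma sum_triangle_eq_pow_mul_pow_of_convolution {R : Type*} [CommSemiring R] (M p q : ℕ)
    (a w W : R) (c : ℕ → R) (d : ℕ → ℕ → R)
    (hcd : ∀ m ≤ M, ∑ k ∈ range (m + 1), c k * d k (m - k) = if m = 0 then 1 else 0) :
    ∑ k ∈ range (M + 1), a ^ k * c k *
        ∑ i ∈ range (M - k + 1), d k i * a ^ i * w ^ (p - k - i) * W ^ (q - k - i) =
      w ^ p * W ^ q := by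
  calc _ = ∑ k ∈ range (M + 1), ∑ i ∈ range (M + 1 - k),
          c k * d k i * (a ^ (k + i) * w ^ (p - (k + i)) * W ^ (q - (k + i))) := by
        refine sum_congr rfl fun k hk => ?_
        rw [mul_sum, Nat.sub_add_comm (mem_range_succ_iff.mp hk)]
        refine sum_congr rfl fun i _ => ?_
        rw [Nat.sub_sub, Nat.sub_sub, pow_add]
        ring
    _ = ∑ m ∈ range (M + 1), (∑ k ∈ range (m + 1), c k * d k (m - k)) *
          (a ^ m * w ^ (p - m) * W ^ (q - m)) := by
        rw [← sum_range_diag_flip]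
        refine sum_congr rfl fun m _ => ?_
        rw [sum_mul]
        refine sum_congr rfl fun k hk => ?_
        rw [Nat.add_sub_cancel' (mem_range_succ_iff.mp hk)]
    _ = w ^ p * W ^ q := by
        rw [sum_congr rfl fun m hm => by rw [hcd m (mem_range_succ_iff.mp hm)], sum_range_succ']
        simp

theorem harmonic_decomposition_zonal_general (n : ℕ) (η : Fin n → ℂ) (p q : ℕ) (z : Fin n → ℂ) :
    (∑ j, z j * (starRingEnd ℂ) (η j)) ^ p *
        ((starRingEnd ℂ) (∑ j, z j * (starRingEnd ℂ) (η j))) ^ q =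
      ∑ k ∈ Finset.range (min p q + 1),
        (∑ i, z i * (starRingEnd ℂ) (z i)) ^ k *
        ((((p.factorial * q.factorial * ((n - 2) + 1 + (p - k) + (q - k)).factorial : ℕ) : ℝ) /
            ((k.factorial * (p - k).factorial * (q - k).factorial *
              ((n - 2) + 1 + (p - k) + q).factorial : ℕ) : ℝ) : ℝ) : ℂ) *
        ∑ i ∈ Finset.range (min p q - k + 1),
          ((((ascPochhammer ℝ i).eval (-((p - k : ℕ) : ℝ)) *
                (ascPochhammer ℝ i).eval (-((q - k : ℕ) : ℝ))) /
              ((ascPochhammer ℝ i).eval (-(((n - 2) + (p - k) + (q - k) : ℕ) : ℝ)) *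
                (i.factorial : ℝ)) : ℝ) : ℂ) *
            (∑ j, z j * (starRingEnd ℂ) (z j)) ^ i *
            (∑ j, z j * (starRingEnd ℂ) (η j)) ^ (p - k - i) *
            ((starRingEnd ℂ) (∑ j, z j * (starRingEnd ℂ) (η j))) ^ (q - k - i) := by
  refine (sum_triangle_eq_pow_mul_pow_of_convolution (min p q) p q _ _ _
    (fun k => (harmonicCoeff (n - 2) p q k : ℂ))
    (fun k i => (zonalCoeff (n - 2) (p - k) (q - k) i : ℂ)) fun m hm => ?_).symm
  have h := sum_harmonicCoeff_mul_zonalCoeff (n - 2) (hm.trans (min_le_left p q))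
    (hm.trans (min_le_right p q))
  split_ifs at h ⊢ <;> exact_mod_cast h

/-- Explicit harmonic decomposition of (z|η)^p (z|η)̄^q, with the zonal harmonic components
written as terminating hypergeometric polynomials (denominators cleared). -/
theorem harmonic_decomposition_zonal (n : ℕ) (hn : 2 ≤ n) (η : Fin n → ℂ)
    (hη : ∑ j, η j * (starRingEnd ℂ) (η j) = 1) (p q : ℕ) (z : Fin n → ℂ) :
    (∑ j, z j * (starRingEnd ℂ) (η j)) ^ p *
        ((starRingEnd ℂ) (∑ j, z j * (starRingEnd ℂ) (η j))) ^ q =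
      ∑ k ∈ Finset.range (min p q + 1),
        (∑ i, z i * (starRingEnd ℂ) (z i)) ^ k *
        ((((p.factorial * q.factorial * ((n - 2) + 1 + (p - k) + (q - k)).factorial : ℕ) : ℝ) /
            ((k.factorial * (p - k).factorial * (q - k).factorial *
              ((n - 2) + 1 + (p - k) + q).factorial : ℕ) : ℝ) : ℝ) : ℂ) *
        ∑ i ∈ Finset.range (min p q - k + 1),
          ((((ascPochhammer ℝ i).eval (-((p - k : ℕ) : ℝ)) *
                (ascPochhammer ℝ i).eval (-((q - k : ℕ) : ℝ))) /
              ((ascPochhammer ℝ i).eval (-(((n - 2) + (p - k) + (q - k) : ℕ) : ℝ)) *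
                (i.factorial : ℝ)) : ℝ) : ℂ) *
            (∑ j, z j * (starRingEnd ℂ) (z j)) ^ i *
            (∑ j, z j * (starRingEnd ℂ) (η j)) ^ (p - k - i) *
            ((starRingEnd ℂ) (∑ j, z j * (starRingEnd ℂ) (η j))) ^ (q - k - i) :=
  harmonic_decomposition_zonal_general n η p q z
end
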